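/- arXiv:1208.1826 — 2 statements merged into one kernel-verified Lean document; each statement's English description precedes it below -/
import Mathlib

section
/- Let a, b, c, d be real numbers with 1 > a > b > 0 and 1 > c > d > 0. Then for every δ ∈ [0,1], one has log(δa + (1−δ)c) / log(δb + (1−δ)d) ≥ min( (log a)/(log b), (log c)/(log d) ). -/
/-- Let `1 > a > b > 0` and `1 > c > d > 0`. Then for every `δ ∈ [0,1]`,
`log (δa + (1-δ)c) / log (δb + (1-δ)d) ≥ min ((log a)/(log b)) ((log c)/(log d))`. -/
theorem log_ratio_convex_min (a b c d δ : ℝ)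
    (ha : a < 1) (hab : b < a) (hb : 0 < b)
    (hc : c < 1) (hcd : d < c) (hd : 0 < d)
    (hδ : δ ∈ Set.Icc (0 : ℝ) 1) :
    min (Real.log a / Real.log b) (Real.log c / Real.log d) ≤
      Real.log (δ * a + (1 - δ) * c) / Real.log (δ * b + (1 - δ) * d) := by
  obtain ⟨hδ0, hδ1⟩ := hδ
  set m := min (Real.log a / Real.log b) (Real.log c / Real.log d) with hm
  have ha0 : 0 < a := hb.trans hab
  have hc0 : 0 < c := hd.trans hcd
  have hla : Real.log a < 0 := Real.log_neg ha0 ha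
  have hlb : Real.log b < 0 := Real.log_neg hb (hab.trans ha)
  have hlc : Real.log c < 0 := Real.log_neg hc0 hc
  have hld : Real.log d < 0 := Real.log_neg hd (hcd.trans hc)
  have hm0 : 0 < m := lt_min (div_pos_of_neg_of_neg hla hlb) (div_pos_of_neg_of_neg hlc hld)
  have hm1 : m ≤ 1 := by
    refine (min_le_left _ _).trans ?_
    rw [div_le_one_of_neg hlb]
    exact (Real.log_lt_log hb hab).le
  -- key pointwise bounds
  have hab' : a ≤ b ^ m := by
    have h1 : m ≤ Real.log a / Real.log b := min_le_left _ _
    have h2 : Real.log a ≤ m * Real.log b := by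
      rw [le_div_iff_of_neg hlb] at h1; linarith
    calc a = Real.exp (Real.log a) := (Real.exp_log ha0).symm
    _ ≤ Real.exp (m * Real.log b) := Real.exp_le_exp.2 h2
    _ = b ^ m := by rw [Real.rpow_def_of_pos hb, mul_comm]
  have hcd' : c ≤ d ^ m := by
    have h1 : m ≤ Real.log c / Real.log d := min_le_right _ _
    have h2 : Real.log c ≤ m * Real.log d := by
      rw [le_div_iff_of_neg hld] at h1; linarith
    calc c = Real.exp (Real.log c) := (Real.exp_log hc0).symm
    _ ≤ Real.exp (m * Real.log d) := Real.exp_le_exp.2 h2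
    _ = d ^ m := by rw [Real.rpow_def_of_pos hd, mul_comm]
  have hbd0 : 0 < δ * b + (1 - δ) * d := by
    rcases eq_or_lt_of_le hδ0 with h | h
    · simpa [← h] using hd
    · nlinarith [mul_pos h hb, mul_nonneg (by linarith : (0:ℝ) ≤ 1 - δ) hd.le]
  have hbd1 : δ * b + (1 - δ) * d < 1 := by
    have hb1 : b < 1 := hab.trans ha
    have hd1 : d < 1 := hcd.trans hc
    rcases eq_or_lt_of_le hδ0 with h | h
    · simpa [← h] using hd1
    · nlinarith [mul_pos h (show (0:ℝ) < 1 - b by linarith),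
        mul_nonneg (by linarith : (0:ℝ) ≤ 1 - δ) (by linarith : (0:ℝ) ≤ 1 - d)]
  have hac0 : 0 < δ * a + (1 - δ) * c := by
    rcases eq_or_lt_of_le hδ0 with h | h
    · simpa [← h] using hc0
    · nlinarith [mul_pos h ha0, mul_nonneg (by linarith : (0:ℝ) ≤ 1 - δ) hc0.le]
  have hac1 : δ * a + (1 - δ) * c < 1 := by
    rcases eq_or_lt_of_le hδ0 with h | h
    · simpa [← h] using hc
    · nlinarith [mul_pos h (show (0:ℝ) < 1 - a by linarith),
        mul_nonneg (by linarith : (0:ℝ) ≤ 1 - δ) (by linarith : (0:ℝ) ≤ 1 - c)]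
  -- concavity of x ↦ x ^ m
  have hconc : δ * b ^ m + (1 - δ) * d ^ m ≤ (δ * b + (1 - δ) * d) ^ m := by
    have h := (Real.concaveOn_rpow hm0.le hm1).2 (Set.mem_Ici.2 hb.le)
      (Set.mem_Ici.2 hd.le) hδ0 (sub_nonneg.2 hδ1) (by ring)
    simpa using h
  have key : δ * a + (1 - δ) * c ≤ (δ * b + (1 - δ) * d) ^ m := by
    calc δ * a + (1 - δ) * c ≤ δ * b ^ m + (1 - δ) * d ^ m := by
          have := mul_le_mul_of_nonneg_left hab' hδ0
          have := mul_le_mul_of_nonneg_left hcd' (by linarith : (0:ℝ) ≤ 1 - δ)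
          linarith
    _ ≤ (δ * b + (1 - δ) * d) ^ m := hconc
  have hlog : Real.log (δ * a + (1 - δ) * c) ≤ m * Real.log (δ * b + (1 - δ) * d) := by
    calc Real.log (δ * a + (1 - δ) * c) ≤ Real.log ((δ * b + (1 - δ) * d) ^ m) :=
          Real.log_le_log hac0 key
    _ = m * Real.log (δ * b + (1 - δ) * d) := Real.log_rpow hbd0 _
  rw [le_div_iff_of_neg (Real.log_neg hbd0 hbd1)]
  linarith
end

section
/- Let β ≥ 1 and 0 < u ≤ 1, and for B ∈ [1,β] and N ∈ [1,B] define M(N,B) := min( u, max( u/N, 1/(1+B−N) ) ). Then the minimum of M(N,B) over all B ∈ [1,β] and N ∈ [1,B] equals u if βu ≤ 1, and equals (1+u)/(1+β) < u if βu > 1. -/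
/-- for `β ≥ 1` and `0 < u ≤ 1`, the minimum of
`M(N,B) = min u (max (u/N) (1/(1+B−N)))` over `B ∈ [1,β]` and `N ∈ [1,B]` equals `u`
if `βu ≤ 1`, and equals `(1+u)/(1+β) < u` if `βu > 1`. -/
theorem min_M_formula (β u : ℝ) (hβ : 1 ≤ β) (hu0 : 0 < u) (hu1 : u ≤ 1) :
    (β * u ≤ 1 →
      IsLeast {x : ℝ | ∃ B N : ℝ, 1 ≤ B ∧ B ≤ β ∧ 1 ≤ N ∧ N ≤ B ∧
        x = min u (max (u / N) (1 / (1 + B - N)))} u) ∧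
    (1 < β * u →
      IsLeast {x : ℝ | ∃ B N : ℝ, 1 ≤ B ∧ B ≤ β ∧ 1 ≤ N ∧ N ≤ B ∧
        x = min u (max (u / N) (1 / (1 + B - N)))} ((1 + u) / (1 + β)) ∧
      (1 + u) / (1 + β) < u) := by
  constructor
  · intro hβu
    constructor
    · exact ⟨1, 1, le_refl 1, hβ, le_refl 1, le_refl 1, by
        rw [div_one]
        have : max u (1 / (1 + (1:ℝ) - 1)) = 1 := by
          norm_num [max_eq_right hu1]
        simp only [show (1:ℝ) + 1 - 1 = 1 by ring] at *
        rw [div_one, max_eq_right hu1, min_eq_left hu1]⟩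
    · rintro x ⟨B, N, hB1, hBβ, hN1, hNB, rfl⟩
      have hden : (0:ℝ) < 1 + B - N := by linarith
      have h1 : u ≤ 1 / (1 + B - N) := by
        rw [le_div_iff₀ hden]
        nlinarith
      exact le_min (le_refl u) (le_trans h1 (le_max_right _ _))
  · intro hβu
    have hβ0 : (0:ℝ) < 1 + β := by linarith
    have hu0' : (0:ℝ) < 1 + u := by linarith
    have hlt : (1 + u) / (1 + β) < u := by
      rw [div_lt_iff₀ hβ0]; nlinarith
    refine ⟨⟨⟨β, u * (1 + β) / (1 + u), hβ, le_refl β, ?_, ?_, ?_⟩, ?_⟩, hlt⟩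
    · rw [le_div_iff₀ hu0']; nlinarith
    · rw [div_le_iff₀ hu0']; nlinarith
    · have hN0 : (0:ℝ) < u * (1 + β) / (1 + u) := by positivity
      have hden : 1 + β - u * (1 + β) / (1 + u) = (1 + β) / (1 + u) := by
        field_simp; ring
      have e1 : u / (u * (1 + β) / (1 + u)) = (1 + u) / (1 + β) := by
        rw [div_div_eq_mul_div, div_eq_div_iff (by positivity) (ne_of_gt hβ0)]
        ring
      have e2 : 1 / (1 + β - u * (1 + β) / (1 + u)) = (1 + u) / (1 + β) := by
        rw [hden, one_div_div]
      rw [e1, e2, max_self, min_eq_right hlt.le]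
    · rintro x ⟨B, N, hB1, hBβ, hN1, hNB, rfl⟩
      have hden : (0:ℝ) < 1 + B - N := by linarith
      have hN0 : (0:ℝ) < N := by linarith
      have hc : (0:ℝ) < (1 + u) / (1 + β) := by positivity
      refine le_min hlt.le ?_
      rcases le_or_gt ((1 + u) / (1 + β)) (u / N) with h | h
      · exact le_trans h (le_max_left _ _)
      · refine le_trans ?_ (le_max_right _ _)
        rw [div_lt_div_iff₀ hN0 hβ0] at h
        rw [div_le_div_iff₀ hβ0 hden]
        nlinarith [hBβ, h, hu0.le]
end
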